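/- arXiv:2412.07946 — 5 statements merged into one kernel-verified Lean document; each statement's English description precedes it below -/
import Mathlib

section
/- In the economy with three goods {apple, banana, coconut}, three agents with quasilinear utility and valuations V1(x) = 3·min{x_a, x_b}, V2(x) = 3·min{x_b, x_c}, V3(x) = 3·min{x_a, x_c} on bundles x ∈ {0,1}^3, and total endowment of one unit of each good, no competitive equilibrium exists: there is no price vector p ∈ ℝ^3 and allocation (x^1, x^2, x^3) with x^1 + x^2 + x^3 = (1,1,1) such that each x^j maximizes V^j(x) − p·x over x ∈ {0,1}^3. -/
/-- Inner product of a price vector and an indivisible-goods bundle. -/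
def dot3 (p : Fin 3 → ℝ) (x : Fin 3 → ℕ) : ℝ := ∑ i, p i * (x i : ℝ)

def Va (x : Fin 3 → ℕ) : ℝ := 3 * min (x 0 : ℝ) (x 1 : ℝ)
def Vb (x : Fin 3 → ℕ) : ℝ := 3 * min (x 1 : ℝ) (x 2 : ℝ)
def Vc (x : Fin 3 → ℕ) : ℝ := 3 * min (x 0 : ℝ) (x 2 : ℝ)

/-- With the three-cycle of pairwise complements, no competitive equilibrium exists. -/
theorem no_equilibrium_three_cycle :
    ¬ ∃ (p : Fin 3 → ℝ) (x1 x2 x3 : Fin 3 → ℕ),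
      (∀ i, x1 i ≤ 1) ∧ (∀ i, x2 i ≤ 1) ∧ (∀ i, x3 i ≤ 1) ∧
      (∀ i, x1 i + x2 i + x3 i = 1) ∧
      (∀ y : Fin 3 → ℕ, (∀ i, y i ≤ 1) → Va y - dot3 p y ≤ Va x1 - dot3 p x1) ∧
      (∀ y : Fin 3 → ℕ, (∀ i, y i ≤ 1) → Vb y - dot3 p y ≤ Vb x2 - dot3 p x2) ∧
      (∀ y : Fin 3 → ℕ, (∀ i, y i ≤ 1) → Vc y - dot3 p y ≤ Vc x3 - dot3 p x3) := by
  rintro ⟨p, x1, x2, x3, hb1, hb2, hb3, hsum, m1, m2, m3⟩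
  -- individual rationality (deviating to the empty bundle)
  have z1 := m1 (fun _ => 0) (fun _ => Nat.zero_le 1)
  have z2 := m2 (fun _ => 0) (fun _ => Nat.zero_le 1)
  have z3 := m3 (fun _ => 0) (fun _ => Nat.zero_le 1)
  simp only [Va, Vb, Vc, dot3, Fin.sum_univ_three, Nat.cast_zero, min_self,
    mul_zero, sub_zero, add_zero, zero_add] at z1 z2 z3
  -- deviating to the full desired pair
  have d1 := m1 ![1, 1, 0] (by decide)
  have d2 := m2 ![0, 1, 1] (by decide)
  have d3 := m3 ![1, 0, 1] (by decide)
  simp only [Va, Vb, Vc, dot3, Fin.sum_univ_three, Matrix.cons_val_zero,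
    Matrix.cons_val_one, Matrix.head_cons, Matrix.cons_val_two, Matrix.tail_cons,
    Nat.cast_one, Nat.cast_zero, min_self, mul_one, mul_zero] at d1 d2 d3
  -- total value is at most 3
  have e0 := hsum 0
  have e1 := hsum 1
  have e2 := hsum 2
  have key : min (x1 0) (x1 1) + min (x2 1) (x2 2) + min (x3 0) (x3 2) ≤ 1 := by
    omega
  have keyR : (min (x1 0) (x1 1) : ℝ) + (min (x2 1) (x2 2) : ℝ)
      + (min (x3 0) (x3 2) : ℝ) ≤ 1 := by
    exact_mod_cast key
  -- sum of expenditures equals the total price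
  have hd : (p 0 * (x1 0:ℝ) + p 1 * (x1 1:ℝ) + p 2 * (x1 2:ℝ))
      + (p 0 * (x2 0:ℝ) + p 1 * (x2 1:ℝ) + p 2 * (x2 2:ℝ))
      + (p 0 * (x3 0:ℝ) + p 1 * (x3 1:ℝ) + p 2 * (x3 2:ℝ)) = p 0 + p 1 + p 2 := by
    have c0 : (x1 0 : ℝ) + x2 0 + x3 0 = 1 := by exact_mod_cast congrArg (Nat.cast : ℕ → ℝ) e0
    have c1 : (x1 1 : ℝ) + x2 1 + x3 1 = 1 := by exact_mod_cast congrArg (Nat.cast : ℕ → ℝ) e1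
    have c2 : (x1 2 : ℝ) + x2 2 + x3 2 = 1 := by exact_mod_cast congrArg (Nat.cast : ℕ → ℝ) e2
    nlinarith [c0, c1, c2]
  linarith [z1, z2, z3, d1, d2, d3, keyR, hd]
end

section
/- Suppose S ⊆ {−1,0,1}^I is a finite set of vectors that is not totally unimodular. Then there exist linearly independent vectors s^1,...,s^{|I|} ∈ S ∪ {e_i : i ∈ I}, and vectors d, d' ∈ S \ {s^1,...,s^{|I|}}, such that letting G be the |I|×|I| matrix whose columns are s^1,...,s^{|I|} (which is invertible), there exist indices k, ℓ with (G⁻¹d)_k · (G⁻¹d)_ℓ > 0 and (G⁻¹d')_k · (G⁻¹d')_ℓ < 0. -/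
/-!
Pick a square submatrix `B` of minimal size whose determinant is not in `{-1, 0, 1}`; its entries
are in `{-1, 0, 1}`, so it has size at least two. Start from the unit basis, in which the
coordinates of the columns `d` of `B` at the rows `r` of `B` form `B` itself. Pivoting on a nonzero
entry `B a b = ±1` (exchanging the unit vector `e (r a)` for `d b`) turns the coordinates of the
remaining columns at the remaining rows into the Schur complement of that entry. Every minor of
the Schur complement is `±` a minor of `B` through the pivot, so it is again minimally non totally
unimodular. After reaching size two, `x₀₀ x₁₁ - x₀₁ x₁₀ ∉ {-1, 0, 1}` with all entries in
`{-1, 0, 1}` forces `x₀₀ x₁₁ = -x₀₁ x₁₀ = ±1`, so the two remaining columns have opposite sign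
patterns on the two remaining rows.
-/

/-- A finite set of integer vectors is totally unimodular if every square submatrix of the
matrix whose columns are the elements of the set has determinant 0 or ±1. -/
def IsTUSet (n : ℕ) (S : Finset (Fin n → ℤ)) : Prop :=
  ∀ (k : ℕ) (c : Fin k → (Fin n → ℤ)) (r : Fin k → Fin n),
    Function.Injective c → (∀ j, c j ∈ S) → Function.Injective r →
    (Matrix.of fun i j => c j (r i)).det ∈ ({-1, 0, 1} : Set ℤ)

open Matrix Function

section Signs

variable {R : Type*} [Ring R] {x y p : R}

lemma mul_mem_signs (hx : x ∈ ({-1, 0, 1} : Set R)) (hy : y ∈ ({-1, 0, 1} : Set R)) :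
    x * y ∈ ({-1, 0, 1} : Set R) := by
  simp only [Set.mem_insert_iff, Set.mem_singleton_iff] at hx hy ⊢
  rcases hx with rfl | rfl | rfl <;> rcases hy with rfl | rfl | rfl <;> simp

lemma neg_one_pow_mul_mem_signs (k : ℕ) (hx : x ∈ ({-1, 0, 1} : Set R)) :
    (-1) ^ k * x ∈ ({-1, 0, 1} : Set R) := by
  refine mul_mem_signs ?_ hx
  rcases neg_one_pow_eq_or R k with h | h <;> simp [h]

lemma mem_signs_of_mul_mem (hp : p ∈ ({-1, 0, 1} : Set R)) (hp0 : p ≠ 0)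
    (h : p * x ∈ ({-1, 0, 1} : Set R)) : x ∈ ({-1, 0, 1} : Set R) := by
  have hpp : p * p = 1 := by
    simp only [Set.mem_insert_iff, Set.mem_singleton_iff] at hp
    rcases hp with rfl | rfl | rfl <;> simp_all
  simpa [← mul_assoc, hpp] using mul_mem_signs hp h

lemma map_mem_signs_iff {S : Type*} [Ring S] (f : R →+* S) (hf : Injective f) :
    f x ∈ ({-1, 0, 1} : Set S) ↔ x ∈ ({-1, 0, 1} : Set R) := by
  simp only [Set.mem_insert_iff, Set.mem_singleton_iff, ← map_one f, ← map_neg, ← map_zero f,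
    hf.eq_iff]

lemma mul_neg_of_sub_notMem_signs [LinearOrder R] [IsStrictOrderedRing R]
    (hx : x ∈ ({-1, 0, 1} : Set R)) (hy : y ∈ ({-1, 0, 1} : Set R))
    (h : x - y ∉ ({-1, 0, 1} : Set R)) : x * y < 0 := by
  simp only [Set.mem_insert_iff, Set.mem_singleton_iff] at hx hy h
  rcases hx with rfl | rfl | rfl <;> rcases hy with rfl | rfl | rfl <;> norm_num at *

end Signs

theorem Fin.cons_succAbove_comp_injective {k j : ℕ} (a : Fin (k + 1)) {σ : Fin j → Fin k}
    (hσ : Injective σ) : Injective (Fin.cons a (a.succAbove ∘ σ) : Fin (j + 1) → Fin (k + 1)) :=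
  Fin.cons_injective_iff.2 ⟨fun ⟨_, hs⟩ => Fin.succAbove_ne a _ hs,
    Fin.succAbove_right_injective.comp hσ⟩

theorem Function.Injective.update_of_notMem_range {α β : Type*} [DecidableEq α] {f : α → β}
    (hf : Injective f) {a : α} {b : β} (hb : b ∉ Set.range f) : Injective (update f a b) := by
  intro x y h
  by_cases hx : x = a <;> by_cases hy : y = a <;> simp_all [update_of_ne, hf.eq_iff]

theorem Function.notMem_range_update {α β : Type*} [DecidableEq α] {f : α → β} {a : α}
    {b c : β} (hc : c ∉ Set.range f) (hcb : c ≠ b) : c ∉ Set.range (update f a b) := by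
  rintro ⟨x, hx⟩
  by_cases h : x = a <;> simp_all

namespace Matrix

section Pivot

variable {K : Type*} [Field K]

def pivotSchur {m : ℕ} (M : Matrix (Fin (m + 1)) (Fin (m + 1)) K) (a b : Fin (m + 1)) :
    Matrix (Fin m) (Fin m) K :=
  of fun s t =>
    M (a.succAbove s) (b.succAbove t) - M a (b.succAbove t) / M a b * M (a.succAbove s) b

theorem det_eq_mul_det_pivotSchur {m : ℕ} (M : Matrix (Fin (m + 1)) (Fin (m + 1)) K)
    {a b : Fin (m + 1)} (hab : M a b ≠ 0) :
    M.det = (-1) ^ (a + b : ℕ) * M a b * (pivotSchur M a b).det := by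
  -- subtract multiples of column `b` to clear row `a` outside column `b`, then expand along it
  let c : Fin (m + 1) → K := fun t => if t = b then 0 else -(M a t / M a b)
  let N : Matrix (Fin (m + 1)) (Fin (m + 1)) K := of fun s t => M s t + c t * M s b
  have hN : N.det = M.det := by
    rw [← det_transpose N, ← det_transpose M]
    exact det_eq_of_forall_row_eq_smul_add_const c b (by simp [c]) fun _ _ => rfl
  have hrow : ∀ t, N a t = if t = b then M a b else 0 := by
    intro t
    by_cases ht : t = b
    · simp [N, c, ht]
    · simp [N, c, ht, div_mul_cancel₀ _ hab]
  rw [← hN, det_succ_row N a, Finset.sum_eq_single b (fun t _ ht => by simp [hrow, ht])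
    (by simp), hrow, if_pos rfl]
  congr 2
  ext s t
  simp [N, c, pivotSchur, Fin.succAbove_ne, sub_eq_add_neg, mul_comm]

theorem pivotSchur_submatrix {m j : ℕ} (M : Matrix (Fin (m + 1)) (Fin (m + 1)) K)
    (a b : Fin (m + 1)) (σ τ : Fin j → Fin m) :
    (pivotSchur M a b).submatrix σ τ =
      pivotSchur (M.submatrix (Fin.cons a (a.succAbove ∘ σ)) (Fin.cons b (b.succAbove ∘ τ)))
        0 0 := by
  ext s t
  simp [pivotSchur]

variable {n : Type*} [Fintype n] [DecidableEq n]

theorem det_updateCol_mulVec (A : Matrix n n K) (x : n → K) (p : n) :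
    (A.updateCol p (A *ᵥ x)).det = A.det * x p := by
  rw [← cramer_apply, cramer_eq_adjugate_mulVec, mulVec_mulVec, adjugate_mul, smul_mulVec,
    one_mulVec, Pi.smul_apply, smul_eq_mul]

theorem updateCol_mulVec_of_apply_eq_zero (A : Matrix n n K) (p : n) (v : n → K) {u : n → K}
    (hu : u p = 0) : A.updateCol p v *ᵥ u = A *ᵥ u := by
  ext i
  refine Finset.sum_congr rfl fun j _ => ?_
  by_cases hj : j = p
  · simp [hj, hu]
  · simp [updateCol_ne hj]

theorem inv_updateCol_mulVec_apply {A : Matrix n n K} (hA : A.det ≠ 0) {p : n} {v : n → K}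
    (hp : (A⁻¹ *ᵥ v) p ≠ 0) (w : n → K) {i : n} (hi : i ≠ p) :
    ((A.updateCol p v)⁻¹ *ᵥ w) i =
      (A⁻¹ *ᵥ w) i - (A⁻¹ *ᵥ w) p / (A⁻¹ *ᵥ v) p * (A⁻¹ *ᵥ v) i := by
  set x := A⁻¹ *ᵥ v
  set y := A⁻¹ *ᵥ w
  set c := y p / x p
  have hAx : A *ᵥ x = v := by simp [x, mulVec_mulVec, mul_nonsing_inv _ hA.isUnit]
  have hAy : A *ᵥ y = w := by simp [y, mulVec_mulVec, mul_nonsing_inv _ hA.isUnit]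
  have hdet : (A.updateCol p v).det ≠ 0 := by
    rw [← hAx, det_updateCol_mulVec]
    exact mul_ne_zero hA hp
  have hsolve : A.updateCol p v *ᵥ (y - c • x + c • Pi.single p 1) = w := by
    rw [mulVec_add, updateCol_mulVec_of_apply_eq_zero _ _ _ (by simp [c, div_mul_cancel₀ _ hp]),
      mulVec_smul, mulVec_single_one, mulVec_sub, mulVec_smul, hAx, hAy]
    ext k
    simp
  rw [← hsolve, mulVec_mulVec, nonsing_inv_mul _ hdet.isUnit, one_mulVec]
  simp [hi]

end Pivot

variable {R : Type*} [CommRing R]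

def IsMinimalNonTU {k : ℕ} (M : Matrix (Fin k) (Fin k) R) : Prop :=
  M.det ∉ ({-1, 0, 1} : Set R) ∧
    ∀ j < k, ∀ σ τ : Fin j → Fin k, Injective σ → Injective τ →
      (M.submatrix σ τ).det ∈ ({-1, 0, 1} : Set R)

namespace IsMinimalNonTU

theorem map {S : Type*} [CommRing S] {k : ℕ} {M : Matrix (Fin k) (Fin k) R}
    (hM : M.IsMinimalNonTU) (f : R →+* S) (hf : Injective f) : (M.map f).IsMinimalNonTU := by
  refine ⟨?_, fun j hj σ τ hσ hτ => ?_⟩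
  · rw [← RingHom.mapMatrix_apply, ← RingHom.map_det, map_mem_signs_iff f hf]
    exact hM.1
  · rw [submatrix_map, ← RingHom.mapMatrix_apply, ← RingHom.map_det, map_mem_signs_iff f hf]
    exact hM.2 j hj σ τ hσ hτ

theorem two_le {k : ℕ} {M : Matrix (Fin k) (Fin k) R} (hM : M.IsMinimalNonTU)
    (hentries : ∀ i j, M i j ∈ ({-1, 0, 1} : Set R)) : 2 ≤ k := by
  by_contra! hk
  interval_cases k
  · exact hM.1 (by simp)
  · exact hM.1 (by simpa [det_fin_one] using hentries 0 0)

variable {m : ℕ} {M : Matrix (Fin (m + 2)) (Fin (m + 2)) R}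

theorem apply_mem (hM : M.IsMinimalNonTU) (s t : Fin (m + 2)) :
    M s t ∈ ({-1, 0, 1} : Set R) := by
  simpa [det_fin_one] using hM.2 1 (by omega) (fun _ => s) (fun _ => t)
    (injective_of_subsingleton _) (injective_of_subsingleton _)

theorem exists_ne_zero (hM : M.IsMinimalNonTU) : ∃ a b, M a b ≠ 0 := by
  by_contra! h
  exact hM.1 (by simp [show M = 0 from ext h])

/-- Expanding along a column with at most one nonzero entry would put `M.det` in `{-1, 0, 1}`. -/
theorem exists_ne_apply_ne_zero (hM : M.IsMinimalNonTU) (t s₀ : Fin (m + 2)) :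
    ∃ s ≠ s₀, M s t ≠ 0 := by
  by_contra! h
  refine hM.1 ?_
  rw [det_succ_column M t, Finset.sum_eq_single s₀ (fun s _ hs => by simp [h s hs]) (by simp),
    mul_assoc]
  exact neg_one_pow_mul_mem_signs _ (mul_mem_signs (hM.apply_mem s₀ t) (hM.2 _ (by omega) _ _
    Fin.succAbove_right_injective Fin.succAbove_right_injective))

theorem col_ne_single {n : ℕ} {c : Fin (m + 2) → Fin n → R} {r : Fin (m + 2) → Fin n}
    (hr : Injective r) (hM : (of fun i j => c j (r i)).IsMinimalNonTU) (t : Fin (m + 2))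
    (i : Fin n) : c t ≠ Pi.single i 1 := by
  intro hc
  have hsupp : ∀ s, c t (r s) ≠ 0 → r s = i := by
    intro s hs
    by_contra hne
    simp [hc, Pi.single_eq_of_ne hne] at hs
  obtain ⟨s, -, hs⟩ := hM.exists_ne_apply_ne_zero t 0
  obtain ⟨s', hs's, hs'⟩ := hM.exists_ne_apply_ne_zero t s
  exact hs's (hr ((hsupp s' hs').trans (hsupp s hs).symm))

theorem pivotSchur {K : Type*} [Field K] {M : Matrix (Fin (m + 2)) (Fin (m + 2)) K}
    (hM : M.IsMinimalNonTU) {a b : Fin (m + 2)} (hab : M a b ≠ 0) :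
    (pivotSchur M a b).IsMinimalNonTU := by
  refine ⟨fun h => hM.1 ?_, fun j hj σ τ hσ hτ => ?_⟩
  · rw [det_eq_mul_det_pivotSchur M hab, mul_assoc]
    exact neg_one_pow_mul_mem_signs _ (mul_mem_signs (hM.apply_mem a b) h)
  · set N := M.submatrix (Fin.cons a (a.succAbove ∘ σ)) (Fin.cons b (b.succAbove ∘ τ))
    have hN : N.det ∈ ({-1, 0, 1} : Set K) := hM.2 (j + 1) (by omega) _ _
      (Fin.cons_succAbove_comp_injective a hσ) (Fin.cons_succAbove_comp_injective b hτ)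
    rw [det_eq_mul_det_pivotSchur N (a := 0) (b := 0) hab, ← pivotSchur_submatrix] at hN
    simp only [Fin.val_zero, add_zero, pow_zero, one_mul, N, submatrix_apply, Fin.cons_zero] at hN
    exact mem_signs_of_mul_mem (hM.apply_mem a b) hab hN

theorem exists_mul_pos_and_mul_neg [LinearOrder R] [IsStrictOrderedRing R]
    {M : Matrix (Fin 2) (Fin 2) R} (hM : M.IsMinimalNonTU) :
    ∃ t t', 0 < M 0 t * M 1 t ∧ M 0 t' * M 1 t' < 0 := by
  have hdet := hM.1
  rw [det_fin_two] at hdet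
  have hneg : (M 0 0 * M 1 0) * (M 0 1 * M 1 1) < 0 := by
    have := mul_neg_of_sub_notMem_signs (mul_mem_signs (hM.apply_mem 0 0) (hM.apply_mem 1 1))
      (mul_mem_signs (hM.apply_mem 0 1) (hM.apply_mem 1 0)) hdet
    linarith
  rcases mul_neg_iff.1 hneg with ⟨h0, h1⟩ | ⟨h0, h1⟩
  · exact ⟨0, 1, h0, h1⟩
  · exact ⟨1, 0, h1, h0⟩

end IsMinimalNonTU

end Matrix

theorem exists_isMinimalNonTU_submatrix {n : ℕ} {S : Finset (Fin n → ℤ)} (h : ¬IsTUSet n S) :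
    ∃ (k : ℕ) (c : Fin k → Fin n → ℤ) (r : Fin k → Fin n), Injective c ∧ (∀ j, c j ∈ S) ∧
      Injective r ∧ (of fun i j => c j (r i)).IsMinimalNonTU := by
  classical
  have hex : ∃ k, ∃ (c : Fin k → Fin n → ℤ) (r : Fin k → Fin n), Injective c ∧
      (∀ j, c j ∈ S) ∧ Injective r ∧ (of fun i j => c j (r i)).det ∉ ({-1, 0, 1} : Set ℤ) := by
    simpa [IsTUSet] using h
  obtain ⟨c, r, hc, hcS, hr, hdet⟩ := Nat.find_spec hex
  refine ⟨_, c, r, hc, hcS, hr, hdet, fun j hj σ τ hσ hτ => ?_⟩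
  by_contra hbad
  exact Nat.find_min hex hj ⟨c ∘ τ, r ∘ σ, hc.comp hτ, fun _ => hcS _, hr.comp hσ, hbad⟩

section Tableau

variable {n : ℕ} {S : Finset (Fin n → ℤ)}

def basisMatrix (s : Fin n → Fin n → ℤ) : Matrix (Fin n) (Fin n) ℚ :=
  of fun i j => (s j i : ℚ)

noncomputable def coords (s : Fin n → Fin n → ℤ) (v : Fin n → ℤ) : Fin n → ℚ :=
  (basisMatrix s)⁻¹ *ᵥ fun i => (v i : ℚ)

variable (S) in
def IsAdmissibleBasis (s : Fin n → Fin n → ℤ) : Prop :=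
  (∀ j, s j ∈ S ∪ Finset.univ.image fun i : Fin n => (Pi.single i 1 : Fin n → ℤ)) ∧
    Injective s ∧ (basisMatrix s).det ≠ 0

theorem basisMatrix_single : basisMatrix (fun i : Fin n => Pi.single i 1) = 1 := by
  ext i j
  simp [basisMatrix, one_apply, Pi.single_apply]

theorem coords_single (v : Fin n → ℤ) :
    coords (fun i : Fin n => Pi.single i 1) v = fun i => (v i : ℚ) := by
  simp [coords, basisMatrix_single]

theorem isAdmissibleBasis_single : IsAdmissibleBasis S fun i : Fin n => Pi.single i 1 := by
  refine ⟨fun j => Finset.mem_union_right _ (Finset.mem_image_of_mem _ (Finset.mem_univ j)),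
    fun a b hab => ?_, by simp [basisMatrix_single]⟩
  by_contra hne
  simpa [Pi.single_eq_of_ne hne] using congrFun hab a

theorem basisMatrix_update (s : Fin n → Fin n → ℤ) (p : Fin n) (v : Fin n → ℤ) :
    basisMatrix (update s p v) = (basisMatrix s).updateCol p fun i => (v i : ℚ) := by
  ext i j
  by_cases hj : j = p
  · simp [basisMatrix, hj]
  · simp [basisMatrix, hj, updateCol_ne]

theorem coords_update {s : Fin n → Fin n → ℤ} (hs : (basisMatrix s).det ≠ 0) {p : Fin n}
    {v : Fin n → ℤ} (hp : coords s v p ≠ 0) (w : Fin n → ℤ) {i : Fin n} (hi : i ≠ p) :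
    coords (update s p v) w i = coords s w i - coords s w p / coords s v p * coords s v i := by
  rw [coords, basisMatrix_update]
  exact inv_updateCol_mulVec_apply hs hp _ hi

theorem IsAdmissibleBasis.update {s : Fin n → Fin n → ℤ} (hs : IsAdmissibleBasis S s)
    {v : Fin n → ℤ} (hv : v ∈ S) (hvs : v ∉ Set.range s) {p : Fin n} (hp : coords s v p ≠ 0) :
    IsAdmissibleBasis S (update s p v) := by
  obtain ⟨hmem, hinj, hdet⟩ := hs
  refine ⟨fun j => ?_, hinj.update_of_notMem_range hvs, ?_⟩
  · rcases eq_or_ne j p with rfl | hj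
    · simpa using Or.inl hv
    · simpa [hj] using hmem j
  · rw [basisMatrix_update, show (fun i => (v i : ℚ)) = basisMatrix s *ᵥ coords s v by
      simp [coords, mulVec_mulVec, mul_nonsing_inv _ hdet.isUnit], det_updateCol_mulVec]
    exact mul_ne_zero hdet hp

theorem exists_opposite_signs_of_isMinimalNonTU (m : ℕ) {G : Fin n → Fin n → ℤ}
    {d : Fin (m + 2) → Fin n → ℤ} {r : Fin (m + 2) → Fin n} (hG : IsAdmissibleBasis S G)
    (hdS : ∀ t, d t ∈ S) (hd : Injective d) (hdG : ∀ t, d t ∉ Set.range G) (hr : Injective r)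
    (hM : (of fun s t => coords G (d t) (r s)).IsMinimalNonTU) :
    ∃ s, IsAdmissibleBasis S s ∧ ∃ d d' : Fin n → ℤ,
      d ∈ S ∧ d' ∈ S ∧ d ∉ Set.range s ∧ d' ∉ Set.range s ∧
        ∃ k ℓ, 0 < coords s d k * coords s d ℓ ∧ coords s d' k * coords s d' ℓ < 0 := by
  induction m generalizing G with
  | zero =>
    obtain ⟨t, t', ht, ht'⟩ := hM.exists_mul_pos_and_mul_neg
    exact ⟨G, hG, d t, d t', hdS t, hdS t', hdG t, hdG t', r 0, r 1, ht, ht'⟩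
  | succ m ih =>
    set M : Matrix (Fin (m + 3)) (Fin (m + 3)) ℚ := of fun s t => coords G (d t) (r s)
    obtain ⟨a, b, hab⟩ := hM.exists_ne_zero
    have hpivot : (of fun s t => coords (update G (r a) (d b)) (d (b.succAbove t))
        (r (a.succAbove s))) = pivotSchur M a b := by
      ext s t
      exact coords_update hG.2.2 hab _ (hr.ne (Fin.succAbove_ne a s))
    exact ih (d := d ∘ b.succAbove) (r := r ∘ a.succAbove) (hG.update (hdS b) (hdG b) hab)
      (fun _ => hdS _) (hd.comp Fin.succAbove_right_injective)
      (fun t => notMem_range_update (hdG _) (hd.ne (Fin.succAbove_ne b t)))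
      (hr.comp Fin.succAbove_right_injective) (hpivot ▸ hM.pivotSchur hab)

end Tableau

/-- If S ⊆ {−1,0,1}^I is not totally unimodular, then there is a basis drawn from
S ∪ {eᵢ} and vectors d, d' ∈ S outside the basis exposing opposite sign patterns
in the coordinates with respect to that basis. -/
theorem nonunimodular_gives_inconsistency (n : ℕ) (S : Finset (Fin n → ℤ))
    (hS01 : ∀ v ∈ S, ∀ i, v i ∈ ({-1, 0, 1} : Set ℤ))
    (hnTU : ¬ IsTUSet n S) :
    ∃ s : Fin n → (Fin n → ℤ),
      (∀ j, s j ∈ S ∪ Finset.univ.image (fun i : Fin n => (Pi.single i 1 : Fin n → ℤ))) ∧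
      Function.Injective s ∧
      (Matrix.of fun i j => ((s j i : ℚ))).det ≠ 0 ∧
      ∃ d d' : Fin n → ℤ,
        d ∈ S ∧ d' ∈ S ∧ d ∉ Set.range s ∧ d' ∉ Set.range s ∧
        ∃ k ℓ : Fin n,
          ((Matrix.of fun i j => ((s j i : ℚ)))⁻¹.mulVec (fun i => (d i : ℚ))) k *
            ((Matrix.of fun i j => ((s j i : ℚ)))⁻¹.mulVec (fun i => (d i : ℚ))) ℓ > 0 ∧
          ((Matrix.of fun i j => ((s j i : ℚ)))⁻¹.mulVec (fun i => (d' i : ℚ))) k *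
            ((Matrix.of fun i j => ((s j i : ℚ)))⁻¹.mulVec (fun i => (d' i : ℚ))) ℓ < 0 := by
  obtain ⟨k, c, r, hc, hcS, hr, hM⟩ := exists_isMinimalNonTU_submatrix hnTU
  obtain ⟨m, rfl⟩ := Nat.exists_eq_add_of_le' (hM.two_le fun i j => hS01 _ (hcS j) (r i))
  have hMℚ :
      (of fun s t => coords (fun i : Fin n => Pi.single i 1) (c t) (r s)).IsMinimalNonTU := by
    convert hM.map (Int.castRingHom ℚ) Int.cast_injective using 1
    ext
    simp [coords_single]
  obtain ⟨s, ⟨hsS, hs, hdet⟩, hsigns⟩ := exists_opposite_signs_of_isMinimalNonTU m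
    isAdmissibleBasis_single hcS hc (fun t ⟨i, hi⟩ => hM.col_ne_single hr t i hi.symm) hr hMℚ
  exact ⟨s, hsS, hs, hdet, hsigns⟩
end

section
/- Let D be a finite set of vectors in ℤ^I closed under negation, let i ∈ I, and let D_i = {d ∈ D ∩ {−1,0,1}^I : d_i = 1}. Suppose every vector in D_i has i-th component equal to 1, and suppose Δx ∈ ℤ^I is a convex combination Δx = Σ_{d ∈ D_i} α_d d with α_d ≥ 0 and Σ α_d = 1. If for every pair of distinct d', d'' ∈ D_i and every coordinate k, the components d'_k and d''_k are not of strictly opposite signs (i.e., d'_k · d''_k ≥ 0), and Δx ∈ {−1,0,1}^I, then there exists d ∈ D_i with α_d = 1, so that Δx ∈ D_i. -/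
/-- A convex combination of sign-consistent {−1,0,1}-vectors with i-th coordinate 1, which is
itself an integer vector in {−1,0,1}^I, puts weight 1 on a single vector: Δx ∈ D_i. -/
theorem integral_convex_combination (n : ℕ) (D : Finset (Fin n → ℤ))
    (hneg : ∀ d ∈ D, -d ∈ D) (i : Fin n)
    (Di : Finset (Fin n → ℤ))
    (hDi : ∀ d, d ∈ Di ↔ d ∈ D ∧ (∀ k, d k ∈ ({-1, 0, 1} : Set ℤ)) ∧ d i = 1)
    (α : (Fin n → ℤ) → ℝ)
    (hα0 : ∀ d ∈ Di, 0 ≤ α d)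
    (hα1 : ∑ d ∈ Di, α d = 1)
    (Δx : Fin n → ℤ)
    (hΔ : ∀ k, (Δx k : ℝ) = ∑ d ∈ Di, α d * (d k : ℝ))
    (hsign : ∀ d' ∈ Di, ∀ d'' ∈ Di, d' ≠ d'' → ∀ k, d' k * d'' k ≥ 0)
    (hΔ01 : ∀ k, Δx k ∈ ({-1, 0, 1} : Set ℤ)) :
    (∃ d ∈ Di, α d = 1) ∧ Δx ∈ Di := by
  have hmem : ∀ d ∈ Di, ∀ k, d k = -1 ∨ d k = 0 ∨ d k = 1 := by
    intro d hd k
    have := ((hDi d).mp hd).2.1 k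
    simpa [Set.mem_insert_iff] using this
  -- key: any positively-weighted vector equals Δx
  have key : ∀ d ∈ Di, α d ≠ 0 → d = Δx := by
    intro d hd hαd
    have hαd' : 0 < α d := lt_of_le_of_ne (hα0 d hd) (Ne.symm hαd)
    funext k
    have hΔk := (hΔ k).symm
    have hΔ01k := hΔ01 k
    simp only [Set.mem_insert_iff, Set.mem_singleton_iff] at hΔ01k
    rcases hΔ01k with h1 | h1 | h1
    · -- Δx k = -1 : show d k = -1
      rw [h1]
      have hsum : ∑ d' ∈ Di, α d' * ((d' k : ℝ) + 1) = 0 := by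
        rw [Finset.sum_congr rfl (fun d' _ => mul_add (α d') ((d' k : ℝ)) 1)]
        rw [Finset.sum_add_distrib]
        simp only [mul_one, hα1, hΔk, h1]
        push_cast
        ring
      have hnn : ∀ d' ∈ Di, 0 ≤ α d' * ((d' k : ℝ) + 1) := by
        intro d' hd'
        apply mul_nonneg (hα0 d' hd')
        rcases hmem d' hd' k with h | h | h <;> rw [h] <;> norm_num
      have := (Finset.sum_eq_zero_iff_of_nonneg hnn).mp hsum d hd
      have h2 : (d k : ℝ) + 1 = 0 := by
        rcases mul_eq_zero.mp this with h | h
        · exact absurd h hαd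
        · exact h
      have : (d k : ℝ) = -1 := by linarith
      exact_mod_cast this
    · -- Δx k = 0 : show d k = 0
      rw [h1]
      by_contra hdk
      have hnn : ∀ d' ∈ Di, 0 ≤ α d' * (d' k : ℝ) * (d k : ℝ) := by
        intro d' hd'
        by_cases hde : d' = d
        · subst hde
          rcases hmem d' hd' k with h | h | h
          · rw [h]; norm_num; exact hα0 d' hd'
          · exact absurd h hdk
          · rw [h]; norm_num; exact hα0 d' hd'
        · have hs := hsign d' hd' d hd hde k
          have : (0:ℝ) ≤ (d' k : ℝ) * (d k : ℝ) := by exact_mod_cast hs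
          rw [mul_assoc]
          exact mul_nonneg (hα0 d' hd') this
      have hsum0 : ∑ d' ∈ Di, α d' * (d' k : ℝ) * (d k : ℝ) = 0 := by
        rw [← Finset.sum_mul, hΔk, h1]
        norm_num
      have := (Finset.sum_eq_zero_iff_of_nonneg hnn).mp hsum0 d hd
      have hd2 : ((d k : ℝ)) * (d k : ℝ) ≠ 0 := by
        have : (d k : ℝ) ≠ 0 := by exact_mod_cast hdk
        exact mul_ne_zero this this
      rw [mul_assoc] at this
      rcases mul_eq_zero.mp this with h | h
      · exact hαd h
      · exact hd2 h
    · -- Δx k = 1 : show d k = 1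
      rw [h1]
      have hsum : ∑ d' ∈ Di, α d' * (1 - (d' k : ℝ)) = 0 := by
        rw [Finset.sum_congr rfl (fun d' _ => mul_sub (α d') 1 ((d' k : ℝ)))]
        rw [Finset.sum_sub_distrib]
        simp only [mul_one, hα1, hΔk, h1]
        push_cast
        ring
      have hnn : ∀ d' ∈ Di, 0 ≤ α d' * (1 - (d' k : ℝ)) := by
        intro d' hd'
        apply mul_nonneg (hα0 d' hd')
        rcases hmem d' hd' k with h | h | h <;> rw [h] <;> norm_num
      have := (Finset.sum_eq_zero_iff_of_nonneg hnn).mp hsum d hd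
      have h2 : 1 - (d k : ℝ) = 0 := by
        rcases mul_eq_zero.mp this with h | h
        · exact absurd h hαd
        · exact h
      have : (d k : ℝ) = 1 := by linarith
      exact_mod_cast this
  -- there is some positively-weighted vector
  obtain ⟨d0, hd0, hαd0⟩ : ∃ d ∈ Di, α d ≠ 0 := by
    by_contra h
    push_neg at h
    have : ∑ d ∈ Di, α d = 0 := Finset.sum_eq_zero h
    rw [hα1] at this
    norm_num at this
  have hΔDi : Δx ∈ Di := key d0 hd0 hαd0 ▸ hd0
  have hsingle : ∑ d ∈ Di, α d = α Δx := by
    apply Finset.sum_eq_single_of_mem Δx hΔDi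
    intro d hd hne
    by_contra h
    exact hne (key d hd h)
  exact ⟨⟨Δx, hΔDi, by rw [← hsingle, hα1]⟩, hΔDi⟩
end

section
/- Suppose competitive equilibria exist in every quasilinear exchange economy in which all agents' valuations belong to a domain 𝒱, and suppose 𝒱 is invariant (closed under adding nonnegative linear functions p·x for p ∈ ℝ_{≥0}^I, and contains the zero valuation on {0,1}^I). Then for every pair of distinct goods k, ℓ, there do not exist valuations V¹, V² ∈ 𝒱, price vectors p¹, p², and primitive integer direction vectors d¹, d² such that the convex hull of argmax_x{V¹(x) − p¹·x} is a one-dimensional segment parallel to d¹ with d¹_k·d¹_ℓ > 0 and the convex hull of argmax_x{V²(x) − p²·x} is a one-dimensional segment parallel to d² with d²_k·d²_ℓ < 0. -/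
/-- Quasilinear demand of a valuation on the box {0,…,M}^I at prices p. -/
def Demand (n M : ℕ) (V : (Fin n → ℕ) → ℝ) (p : Fin n → ℝ) : Set (Fin n → ℕ) :=
  {x | (∀ i, x i ≤ M) ∧ ∀ y : Fin n → ℕ, (∀ i, y i ≤ M) →
    V y - ∑ i, p i * (y i : ℝ) ≤ V x - ∑ i, p i * (x i : ℝ)}

lemma demand_shift (n M : ℕ) (V : (Fin n → ℕ) → ℝ) (p q : Fin n → ℝ) :
    Demand n M (fun x => V x + ∑ i, q i * (x i : ℝ)) (fun i => p i + q i) = Demand n M V p := by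
  ext x
  simp only [Demand, Set.mem_setOf_eq]
  have key : ∀ z : Fin n → ℕ, ∑ i, (p i + q i) * (z i : ℝ)
      = ∑ i, p i * (z i : ℝ) + ∑ i, q i * (z i : ℝ) := by
    intro z; rw [← Finset.sum_add_distrib]; exact Finset.sum_congr rfl fun i _ => by ring
  constructor
  · rintro ⟨hb, h⟩
    exact ⟨hb, fun y hy => by have := h y hy; rw [key y, key x] at this; linarith⟩
  · rintro ⟨hb, h⟩
    refine ⟨hb, fun y hy => ?_⟩
    have := h y hy; rw [key y, key x]; linarith

lemma seg_lattice (n : ℕ) (y y' z : Fin n → ℕ) (c : Fin n → ℤ) (N : ℤ)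
    (hdiff : ∀ i, (y' i : ℤ) - y i = N * c i)
    (hprim : ∀ cc : ℤ, (∀ i, cc ∣ c i) → IsUnit cc)
    (k : Fin n) (hck : c k ≠ 0)
    (hz : (fun i => (z i : ℝ)) ∈ segment ℝ (fun i => (y i : ℝ)) (fun i => (y' i : ℝ))) :
    ∃ s : ℤ, ∀ i, (z i : ℤ) - y i = s * c i := by
  obtain ⟨α, β, hα, hβ, hαβ, heq⟩ := hz
  set w : Fin n → ℤ := fun i => (z i : ℤ) - y i with hw
  have hreal : ∀ i, (w i : ℝ) = (β * N) * c i := by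
    intro i
    have h1 := congrFun heq i
    simp only [Pi.add_apply, Pi.smul_apply, smul_eq_mul] at h1
    have h2 : (y' i : ℝ) = (y i : ℝ) + (N : ℝ) * (c i : ℝ) := by
      have h3 := hdiff i
      have h4 : ((y' i : ℤ) : ℝ) - ((y i : ℤ) : ℝ) = ((N * c i : ℤ) : ℝ) := by
        exact_mod_cast congrArg (fun t : ℤ => (t : ℝ)) h3
      push_cast at h4 ⊢; linarith
    have hwv : (w i : ℝ) = (z i : ℝ) - (y i : ℝ) := by push_cast [hw]; ring
    rw [hwv]
    linear_combination (-1 : ℝ) * h1 + β * h2 + (y i : ℝ) * hαβ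
  have hcross : ∀ i, w k * c i = c k * w i := by
    intro i
    have : ((w k * c i : ℤ) : ℝ) = ((c k * w i : ℤ) : ℝ) := by
      push_cast
      linear_combination (c i : ℝ) * hreal k - (c k : ℝ) * hreal i
    exact_mod_cast this
  have hdvd : c k ∣ Finset.gcd Finset.univ (fun i => w k * c i) :=
    Finset.dvd_gcd fun i _ => ⟨w i, hcross i⟩
  rw [Finset.gcd_mul_left] at hdvd
  have hg : IsUnit (Finset.gcd Finset.univ c) :=
    hprim _ fun i => Finset.gcd_dvd (Finset.mem_univ i)
  have hdvd2 : c k ∣ normalize (w k) := by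
    rcases Int.isUnit_iff.mp hg with h | h <;> rw [h] at hdvd
    · rwa [mul_one] at hdvd
    · rw [mul_neg_one] at hdvd; exact (dvd_neg).mp hdvd
  have hdvd' : c k ∣ w k := (dvd_normalize_iff).mp hdvd2
  obtain ⟨s, hs⟩ := hdvd'
  refine ⟨s, fun i => ?_⟩
  have h := hcross i
  rw [hs] at h
  have h2 : c k * (s * c i) = c k * w i := by linear_combination h
  have h3 := mul_left_cancel₀ hck h2
  have h4 : w i = (z i : ℤ) - y i := rfl
  omega

lemma normalize_seg (n M : ℕ) (V : (Fin n → ℕ) → ℝ) (p : Fin n → ℝ) (d : Fin n → ℤ)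
    (k ℓ : Fin n) (ε : ℤ)
    (hprim : ∀ c : ℤ, (∀ i, c ∣ d i) → IsUnit c)
    (h : ∃ x x' : Fin n → ℕ, x ∈ Demand n M V p ∧ x' ∈ Demand n M V p ∧ x ≠ x' ∧
        (∃ m : ℤ, (fun i => (x' i : ℤ) - (x i : ℤ)) = m • d) ∧
        convexHull ℝ ((fun (z : Fin n → ℕ) (i : Fin n) => (z i : ℝ)) '' Demand n M V p)
          = segment ℝ (fun i => ((x i : ℝ))) (fun i => ((x' i : ℝ))))
    (hsign : 0 < ε * (d k * d ℓ)) :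
    ∃ (c : Fin n → ℤ) (N : ℤ) (y y' : Fin n → ℕ),
      y ∈ Demand n M V p ∧ y' ∈ Demand n M V p ∧ 1 ≤ N ∧
      (∀ i, (y' i : ℤ) - y i = N * c i) ∧
      convexHull ℝ ((fun (z : Fin n → ℕ) (i : Fin n) => (z i : ℝ)) '' Demand n M V p)
        = segment ℝ (fun i => ((y i : ℝ))) (fun i => ((y' i : ℝ))) ∧
      1 ≤ c k ∧ 1 ≤ ε * c ℓ ∧ (∀ cc : ℤ, (∀ i, cc ∣ c i) → IsUnit cc) := by
  obtain ⟨x, x', hx, hx', hne, ⟨m, hm⟩, hull⟩ := h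
  have hmi : ∀ i, (x' i : ℤ) - x i = m * d i := by
    intro i; have := congrFun hm i; simpa using this
  have hm0 : m ≠ 0 := by
    rintro rfl
    apply hne
    funext i
    have := hmi i; simp at this; omega
  have hdk0 : d k ≠ 0 := by
    intro h0; rw [h0] at hsign; simp at hsign
  rcases hdk0.lt_or_gt with hdk | hdk
  · -- d k < 0 : use c = -d
    have hsign' : 0 < ε * (-d ℓ) := by nlinarith
    rcases hm0.lt_or_gt with hmneg | hmpos
    · -- m < 0 : y = x, y' = x', N = -m, c = -d
      exact ⟨fun i => -d i, -m, x, x', hx, hx', by omega,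
        fun i => by simp only []; have := hmi i; linarith,
        hull, by simp only []; omega, by simp only []; omega,
        fun cc hcc => hprim cc fun i => (dvd_neg).mp (by simpa using hcc i)⟩
    · -- m > 0 : swap
      refine ⟨fun i => -d i, m, x', x, hx', hx, by omega,
        fun i => by simp only []; have := hmi i; linarith, ?_,
        by simp only []; omega, by simp only []; omega,
        fun cc hcc => hprim cc fun i => (dvd_neg).mp (by simpa using hcc i)⟩
      rw [hull]; exact segment_symm ℝ _ _
  · -- d k > 0 : c = d
    have hsign' : 0 < ε * d ℓ := by nlinarith
    rcases hm0.lt_or_gt with hmneg | hmpos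
    · refine ⟨d, -m, x', x, hx', hx, by omega,
        fun i => by have := hmi i; linarith, ?_, by omega, by omega,
        hprim⟩
      rw [hull]; exact segment_symm ℝ _ _
    · exact ⟨d, m, x, x', hx, hx', by omega,
        fun i => by have := hmi i; linarith, hull, by omega, by omega, hprim⟩

set_option maxHeartbeats 3000000 in
/-- If competitive equilibria exist in all economies with valuations drawn from an
invariant domain 𝒱, then no pair of goods can be substitutes for one valuation in 𝒱
and complements for another, as witnessed by one-dimensional demand segments with
opposite sign patterns in coordinates k, ℓ. -/
theorem consistency_necessary (n M : ℕ) (hM : 1 ≤ M) (𝒱 : Set ((Fin n → ℕ) → ℝ))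
    (hinv1 : ∀ V ∈ 𝒱, ∀ p : Fin n → ℝ, (∀ i, 0 ≤ p i) →
      (fun x => V x + ∑ i, p i * (x i : ℝ)) ∈ 𝒱)
    (hinv2 : (fun _ => (0 : ℝ)) ∈ 𝒱)
    (hex : ∀ (m : ℕ) (V : Fin m → (Fin n → ℕ) → ℝ) (w : Fin m → Fin n → ℕ),
      (∀ j, V j ∈ 𝒱) → (∀ j i, w j i ≤ M) →
      ∃ (p : Fin n → ℝ) (x : Fin m → Fin n → ℕ),
        (∀ j i, x j i ≤ M) ∧ (∀ i, ∑ j, x j i = ∑ j, w j i) ∧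
        ∀ j, x j ∈ Demand n M (V j) p)
    (k ℓ : Fin n) (hkl : k ≠ ℓ) :
    ¬ ∃ (V1 V2 : (Fin n → ℕ) → ℝ) (p1 p2 : Fin n → ℝ) (d1 d2 : Fin n → ℤ),
      V1 ∈ 𝒱 ∧ V2 ∈ 𝒱 ∧
      (∀ c : ℤ, (∀ i, c ∣ d1 i) → IsUnit c) ∧
      (∀ c : ℤ, (∀ i, c ∣ d2 i) → IsUnit c) ∧
      (∃ x x' : Fin n → ℕ, x ∈ Demand n M V1 p1 ∧ x' ∈ Demand n M V1 p1 ∧ x ≠ x' ∧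
        (∃ m : ℤ, (fun i => (x' i : ℤ) - (x i : ℤ)) = m • d1) ∧
        convexHull ℝ ((fun (z : Fin n → ℕ) (i : Fin n) => (z i : ℝ)) '' Demand n M V1 p1)
          = segment ℝ (fun i => ((x i : ℝ))) (fun i => ((x' i : ℝ)))) ∧
      d1 k * d1 ℓ > 0 ∧
      (∃ x x' : Fin n → ℕ, x ∈ Demand n M V2 p2 ∧ x' ∈ Demand n M V2 p2 ∧ x ≠ x' ∧
        (∃ m : ℤ, (fun i => (x' i : ℤ) - (x i : ℤ)) = m • d2) ∧
        convexHull ℝ ((fun (z : Fin n → ℕ) (i : Fin n) => (z i : ℝ)) '' Demand n M V2 p2)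
          = segment ℝ (fun i => ((x i : ℝ))) (fun i => ((x' i : ℝ)))) ∧
      d2 k * d2 ℓ < 0 := by
  rintro ⟨V1, V2, p1, p2, d1, d2, hV1, hV2, hprimd1, hprimd2, hseg1, hd1, hseg2, hd2⟩
  obtain ⟨c1, N1, y1, y1', hy1, hy1', hN1, hdiff1, hull1, hc1k, hc1l, hprim1⟩ :=
    normalize_seg n M V1 p1 d1 k ℓ 1 hprimd1 hseg1 (by nlinarith)
  obtain ⟨c2, N2, y2, y2', hy2, hy2', hN2, hdiff2, hull2, hc2k, hc2l', hprim2⟩ :=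
    normalize_seg n M V2 p2 d2 k ℓ (-1) hprimd2 hseg2 (by nlinarith)
  have hc2l : 1 ≤ -c2 ℓ := by linarith [hc2l']
  -- the key determinant
  set D : ℤ := c1 k * (-c2 ℓ) + c1 ℓ * c2 k with hDdef
  have hc1l' : 1 ≤ c1 ℓ := by linarith [hc1l]
  have hDlb : -c2 ℓ < D := by nlinarith
  have hDpos : 0 < D := by linarith
  set q : ℤ := c1 ℓ / D with hqdef
  set r : ℤ := c1 ℓ % D with hrdef
  have hqr : D * q + r = c1 ℓ := Int.mul_ediv_add_emod _ _
  have hr0 : 0 ≤ r := Int.emod_nonneg _ (ne_of_gt hDpos)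
  have hrD : r < D := Int.emod_lt_of_pos _ hDpos
  have hDR : (0:ℝ) < (D:ℝ) := by exact_mod_cast hDpos
  have hDne : (D : ℝ) ≠ 0 := ne_of_gt hDR
  set a : ℝ := ((-c2 ℓ : ℤ) : ℝ) / (D : ℝ) with hadef
  set b : ℝ := ((r : ℤ) : ℝ) / (D : ℝ) with hbdef
  have ha0 : 0 < a := by
    apply div_pos _ hDR; exact_mod_cast hc2l
  have ha1 : a < 1 := by
    rw [hadef, div_lt_one hDR]; exact_mod_cast hDlb
  have hb0 : 0 ≤ b := by
    apply div_nonneg _ (le_of_lt hDR); exact_mod_cast hr0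
  have hb1 : b < 1 := by
    rw [hbdef, div_lt_one hDR]; exact_mod_cast hrD
  set t1 : ℤ := 1 - q * c2 k with ht1def
  set t2 : ℤ := -(q * c2 ℓ) with ht2def
  set v : Fin n → ℝ := fun i => a * (c1 i : ℝ) + b * (c2 i : ℝ) with hvdef
  have hnum1 : (-c2 ℓ) * c1 k + r * c2 k = D * t1 := by
    rw [ht1def]; linear_combination c2 k * hqr - hDdef
  have hnum2 : (-c2 ℓ) * c1 ℓ + r * c2 ℓ = D * t2 := by
    rw [ht2def]; linear_combination c2 ℓ * hqr
  have hvk : v k = (t1 : ℝ) := by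
    have h1 : v k = (((-c2 ℓ) * c1 k + r * c2 k : ℤ) : ℝ) / D := by
      rw [hvdef]; simp only [hadef, hbdef]; push_cast; field_simp
    rw [h1, hnum1]; push_cast; field_simp
  have hvl : v ℓ = (t2 : ℝ) := by
    have h1 : v ℓ = (((-c2 ℓ) * c1 ℓ + r * c2 ℓ : ℤ) : ℝ) / D := by
      rw [hvdef]; simp only [hadef, hbdef]; push_cast; field_simp
    rw [h1, hnum2]; push_cast; field_simp
  -- common price vector
  set P : Fin n → ℝ := fun i => max (max (p1 i) (p2 i)) 0 + 1 with hPdef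
  have hP1 : ∀ i, 1 ≤ P i := fun i => by
    have := le_max_right (max (p1 i) (p2 i)) 0
    simp only [hPdef]; linarith
  have hq1 : ∀ i, 0 ≤ P i - p1 i := fun i => by
    have h1 := le_max_left (p1 i) (p2 i)
    have h2 := le_max_left (max (p1 i) (p2 i)) 0
    simp only [hPdef]; linarith
  have hq2 : ∀ i, 0 ≤ P i - p2 i := fun i => by
    have h1 := le_max_right (p1 i) (p2 i)
    have h2 := le_max_left (max (p1 i) (p2 i)) 0
    simp only [hPdef]; linarith
  set W1 : (Fin n → ℕ) → ℝ := fun x => V1 x + ∑ i, (P i - p1 i) * (x i : ℝ) with hW1def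
  set W2 : (Fin n → ℕ) → ℝ := fun x => V2 x + ∑ i, (P i - p2 i) * (x i : ℝ) with hW2def
  have hW1V : W1 ∈ 𝒱 := hinv1 V1 hV1 _ hq1
  have hW2V : W2 ∈ 𝒱 := hinv1 V2 hV2 _ hq2
  have hDW1 : Demand n M W1 P = Demand n M V1 p1 := by
    have h := demand_shift n M V1 p1 (fun i => P i - p1 i)
    have h2 : (fun i => p1 i + (P i - p1 i)) = P := funext fun i => by ring
    rw [h2] at h; exact h
  have hDW2 : Demand n M W2 P = Demand n M V2 p2 := by
    have h := demand_shift n M V2 p2 (fun i => P i - p2 i)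
    have h2 : (fun i => p2 i + (P i - p2 i)) = P := funext fun i => by ring
    rw [h2] at h; exact h
  set R : Fin n → ℝ := fun i => if i = k ∨ i = ℓ then 0 else P i with hRdef
  have hR0 : ∀ i, 0 ≤ R i := fun i => by
    simp only [hRdef]; split
    · exact le_refl 0
    · linarith [hP1 i]
  have hRP : ∀ i, R i ≤ P i := fun i => by
    simp only [hRdef]; split
    · linarith [hP1 i]
    · exact le_refl _
  have hRk : R k = 0 := by simp [hRdef]
  have hRl : R ℓ = 0 := by simp [hRdef]
  set W3 : (Fin n → ℕ) → ℝ := fun x => (0:ℝ) + ∑ i, R i * (x i : ℝ) with hW3def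
  have hW3V : W3 ∈ 𝒱 := hinv1 _ hinv2 R hR0
  -- convex weights
  have hN1R : (0:ℝ) < (N1:ℝ) := by exact_mod_cast hN1
  have hN2R : (0:ℝ) < (N2:ℝ) := by exact_mod_cast hN2
  set lam1 : ℝ := a / (N1:ℝ) with hlam1def
  set lam2 : ℝ := b / (N2:ℝ) with hlam2def
  have hlam1_0 : 0 ≤ lam1 := div_nonneg (le_of_lt ha0) (le_of_lt hN1R)
  have hlam2_0 : 0 ≤ lam2 := div_nonneg hb0 (le_of_lt hN2R)
  have hN1ge : (1:ℝ) ≤ (N1:ℝ) := by exact_mod_cast hN1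
  have hN2ge : (1:ℝ) ≤ (N2:ℝ) := by exact_mod_cast hN2
  have hlam1_1 : lam1 ≤ 1 := by
    rw [hlam1def, div_le_one hN1R]; linarith
  have hlam2_1 : lam2 ≤ 1 := by
    rw [hlam2def, div_le_one hN2R]; linarith
  have haN1 : a = lam1 * (N1:ℝ) := by rw [hlam1def]; field_simp
  have hbN2 : b = lam2 * (N2:ℝ) := by rw [hlam2def]; field_simp
  have hy1cast : ∀ i, (y1' i : ℝ) = (y1 i : ℝ) + (N1:ℝ) * (c1 i : ℝ) := by
    intro i
    have h := hdiff1 i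
    have h2 : ((y1' i : ℤ) : ℝ) - ((y1 i : ℤ) : ℝ) = ((N1 * c1 i : ℤ) : ℝ) := by
      exact_mod_cast congrArg (fun t : ℤ => (t : ℝ)) h
    push_cast at h2 ⊢; linarith
  have hy2cast : ∀ i, (y2' i : ℝ) = (y2 i : ℝ) + (N2:ℝ) * (c2 i : ℝ) := by
    intro i
    have h := hdiff2 i
    have h2 : ((y2' i : ℤ) : ℝ) - ((y2 i : ℤ) : ℝ) = ((N2 * c2 i : ℤ) : ℝ) := by
      exact_mod_cast congrArg (fun t : ℤ => (t : ℝ)) h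
    push_cast at h2 ⊢; linarith
  have hF1 : ∀ i, (y1 i : ℝ) + a * (c1 i : ℝ) = (1 - lam1) * (y1 i : ℝ) + lam1 * (y1' i : ℝ) := by
    intro i; rw [hy1cast i, haN1]; ring
  have hF2 : ∀ i, (y2 i : ℝ) + b * (c2 i : ℝ) = (1 - lam2) * (y2 i : ℝ) + lam2 * (y2' i : ℝ) := by
    intro i; rw [hy2cast i, hbN2]; ring
  -- rounding remainders
  set Z : Fin n → ℝ := fun i => (⌈v i⌉ : ℝ) - v i with hZdef
  have hZ0 : ∀ i, 0 ≤ Z i := fun i => by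
    simp only [hZdef]; linarith [Int.le_ceil (v i)]
  have hZ1 : ∀ i, Z i < 1 := fun i => by
    simp only [hZdef]; linarith [Int.ceil_lt_add_one (v i)]
  have hZk : Z k = 0 := by
    simp only [hZdef, hvk, Int.ceil_intCast]; ring
  have hZl : Z ℓ = 0 := by
    simp only [hZdef, hvl, Int.ceil_intCast]; ring
  -- the endowment
  set e : Fin n → ℤ := fun i => (y1 i : ℤ) + (y2 i : ℤ) + ⌈v i⌉ with hedef
  have hy1M : ∀ i, (y1 i : ℝ) ≤ M := fun i => by exact_mod_cast hy1.1 i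
  have hy1'M : ∀ i, (y1' i : ℝ) ≤ M := fun i => by exact_mod_cast hy1'.1 i
  have hy2M : ∀ i, (y2 i : ℝ) ≤ M := fun i => by exact_mod_cast hy2.1 i
  have hy2'M : ∀ i, (y2' i : ℝ) ≤ M := fun i => by exact_mod_cast hy2'.1 i
  have hcomb1 : ∀ i, 0 ≤ (y1 i : ℝ) + a * (c1 i : ℝ) ∧ (y1 i : ℝ) + a * (c1 i : ℝ) ≤ M := by
    intro i
    rw [hF1 i]
    have h0 : (0:ℝ) ≤ (y1 i : ℝ) := Nat.cast_nonneg _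
    have h0' : (0:ℝ) ≤ (y1' i : ℝ) := Nat.cast_nonneg _
    constructor
    · nlinarith [hlam1_0, hlam1_1]
    · nlinarith [hlam1_0, hlam1_1, hy1M i, hy1'M i]
  have hcomb2 : ∀ i, 0 ≤ (y2 i : ℝ) + b * (c2 i : ℝ) ∧ (y2 i : ℝ) + b * (c2 i : ℝ) ≤ M := by
    intro i
    rw [hF2 i]
    have h0 : (0:ℝ) ≤ (y2 i : ℝ) := Nat.cast_nonneg _
    have h0' : (0:ℝ) ≤ (y2' i : ℝ) := Nat.cast_nonneg _
    constructor
    · nlinarith [hlam2_0, hlam2_1]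
    · nlinarith [hlam2_0, hlam2_1, hy2M i, hy2'M i]
  have hEdec : ∀ i, (e i : ℝ)
      = ((y1 i : ℝ) + a * (c1 i : ℝ)) + ((y2 i : ℝ) + b * (c2 i : ℝ)) + Z i := by
    intro i
    simp only [hedef, hZdef, hvdef]
    push_cast
    ring
  have he0 : ∀ i, 0 ≤ e i := by
    intro i
    have h : (0:ℝ) ≤ (e i : ℝ) := by
      rw [hEdec i]; linarith [(hcomb1 i).1, (hcomb2 i).1, hZ0 i]
    exact_mod_cast h
  have he2M : ∀ i, e i ≤ 2 * M := by
    intro i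
    have h : (e i : ℝ) < 2 * (M:ℝ) + 1 := by
      rw [hEdec i]; linarith [(hcomb1 i).2, (hcomb2 i).2, hZ1 i]
    have h2 : (e i : ℝ) < ((2 * M + 1 : ℤ) : ℝ) := by push_cast; linarith
    have h3 : e i < 2 * (M:ℤ) + 1 := by exact_mod_cast h2
    omega
  -- the endowment split among three agents
  set w : Fin 3 → Fin n → ℕ :=
    ![fun i => min (e i).toNat M, fun i => (e i).toNat - M, fun _ => 0] with hwdef
  have hwbox : ∀ j i, w j i ≤ M := by
    intro j i
    have h1 := he0 i; have h2 := he2M i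
    fin_cases j <;> simp [hwdef] <;> omega
  have hwsum : ∀ i, w 0 i + w 1 i + w 2 i = (e i).toNat := by
    intro i
    have h1 := he0 i; have h2 := he2M i
    simp [hwdef]
    omega
  obtain ⟨p, x, hxbox, hclear, hdem⟩ := hex 3 ![W1, W2, W3] w
    (by intro j; fin_cases j
        · exact hW1V
        · exact hW2V
        · exact hW3V) hwbox
  have hd0 : x 0 ∈ Demand n M W1 p := hdem 0
  have hd1' : x 1 ∈ Demand n M W2 p := hdem 1
  have hd2' : x 2 ∈ Demand n M W3 p := hdem 2
  have hclearZ : ∀ i, (x 0 i : ℤ) + (x 1 i : ℤ) + (x 2 i : ℤ) = e i := by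
    intro i
    have h := hclear i
    rw [Fin.sum_univ_three, Fin.sum_univ_three] at h
    rw [hwsum i] at h
    have h2 : ((e i).toNat : ℤ) = e i := Int.toNat_of_nonneg (he0 i)
    omega
  have hclearR : ∀ i, (x 0 i : ℝ) + (x 1 i : ℝ) + (x 2 i : ℝ) = (e i : ℝ) := by
    intro i
    have h := hclearZ i
    have : (((x 0 i : ℤ) + (x 1 i : ℤ) + (x 2 i : ℤ) : ℤ) : ℝ) = ((e i : ℤ) : ℝ) := by
      exact_mod_cast congrArg (fun t : ℤ => (t : ℝ)) h
    push_cast at this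
    linarith
  -- equilibrium utility inequalities at price p
  have ineq1 := hd0.2 y1 hy1.1
  have ineq1' := hd0.2 y1' hy1'.1
  have ineq2 := hd1'.2 y2 hy2.1
  have ineq2' := hd1'.2 y2' hy2'.1
  have key1 : (1 - lam1) * (W1 y1 - ∑ i, p i * (y1 i : ℝ))
      + lam1 * (W1 y1' - ∑ i, p i * (y1' i : ℝ))
      ≤ W1 (x 0) - ∑ i, p i * (x 0 i : ℝ) := by
    nlinarith [mul_le_mul_of_nonneg_left ineq1 (by linarith : (0:ℝ) ≤ 1 - lam1),
      mul_le_mul_of_nonneg_left ineq1' hlam1_0]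
  have key2 : (1 - lam2) * (W2 y2 - ∑ i, p i * (y2 i : ℝ))
      + lam2 * (W2 y2' - ∑ i, p i * (y2' i : ℝ))
      ≤ W2 (x 1) - ∑ i, p i * (x 1 i : ℝ) := by
    nlinarith [mul_le_mul_of_nonneg_left ineq2 (by linarith : (0:ℝ) ≤ 1 - lam2),
      mul_le_mul_of_nonneg_left ineq2' hlam2_0]
  -- agent 3 : corner bundle
  set zh : Fin n → ℕ := fun i => if p i < R i then M else 0 with hzhdef
  have hzhbox : ∀ i, zh i ≤ M := fun i => by
    simp only [hzhdef]; split <;> omega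
  have ineq3 := hd2'.2 zh hzhbox
  have hM1R : (1:ℝ) ≤ (M:ℝ) := by exact_mod_cast hM
  have hzhval : ∀ i, (R i - p i) * Z i ≤ (R i - p i) * (zh i : ℝ) := by
    intro i
    by_cases h : p i < R i
    · have hz : (zh i : ℝ) = (M:ℝ) := by simp [hzhdef, h]
      rw [hz]
      have hZM : Z i ≤ (M:ℝ) := by linarith [hZ1 i]
      exact mul_le_mul_of_nonneg_left hZM (by linarith)
    · have hz : (zh i : ℝ) = 0 := by simp [hzhdef, h]
      rw [hz, mul_zero]
      push_neg at h
      have := hZ0 i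
      nlinarith
  have key3 : ∑ i, R i * Z i - ∑ i, p i * Z i
      ≤ (∑ i, R i * (x 2 i : ℝ)) - ∑ i, p i * (x 2 i : ℝ) := by
    have h1 : ∑ i, (R i - p i) * Z i ≤ ∑ i, (R i - p i) * (zh i : ℝ) :=
      Finset.sum_le_sum fun i _ => hzhval i
    have h2 : ∑ i, (R i - p i) * Z i = ∑ i, R i * Z i - ∑ i, p i * Z i := by
      rw [← Finset.sum_sub_distrib]; exact Finset.sum_congr rfl fun i _ => by ring
    have h3 : ∑ i, (R i - p i) * (zh i : ℝ)
        = ∑ i, R i * (zh i : ℝ) - ∑ i, p i * (zh i : ℝ) := by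
      rw [← Finset.sum_sub_distrib]; exact Finset.sum_congr rfl fun i _ => by ring
    have h4 : W3 zh = 0 + ∑ i, R i * (zh i : ℝ) := by rw [hW3def]
    have h5 : W3 (x 2) = 0 + ∑ i, R i * (x 2 i : ℝ) := by rw [hW3def]
    rw [h4, h5] at ineq3
    linarith
  -- demand at the common price P
  have hy1W : y1 ∈ Demand n M W1 P := by rw [hDW1]; exact hy1
  have hy1'W : y1' ∈ Demand n M W1 P := by rw [hDW1]; exact hy1'
  have hy2W : y2 ∈ Demand n M W2 P := by rw [hDW2]; exact hy2
  have hy2'W : y2' ∈ Demand n M W2 P := by rw [hDW2]; exact hy2'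
  have hA1 : W1 y1' - ∑ i, P i * (y1' i : ℝ) = W1 y1 - ∑ i, P i * (y1 i : ℝ) :=
    le_antisymm (hy1W.2 y1' hy1'.1) (hy1'W.2 y1 hy1.1)
  have hA2 : W2 y2' - ∑ i, P i * (y2' i : ℝ) = W2 y2 - ∑ i, P i * (y2 i : ℝ) :=
    le_antisymm (hy2W.2 y2' hy2'.1) (hy2'W.2 y2 hy2.1)
  have g0 : W1 (x 0) - ∑ i, P i * (x 0 i : ℝ) ≤ W1 y1 - ∑ i, P i * (y1 i : ℝ) :=
    hy1W.2 (x 0) (hxbox 0)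
  have g1 : W2 (x 1) - ∑ i, P i * (x 1 i : ℝ) ≤ W2 y2 - ∑ i, P i * (y2 i : ℝ) :=
    hy2W.2 (x 1) (hxbox 1)
  have g2 : ∑ i, R i * (x 2 i : ℝ) ≤ ∑ i, P i * (x 2 i : ℝ) :=
    Finset.sum_le_sum fun i _ => mul_le_mul_of_nonneg_right (hRP i) (Nat.cast_nonneg _)
  -- sum identities
  have hsum1 : ∀ u : Fin n → ℝ, ∑ i, u i * ((y1 i : ℝ) + a * (c1 i : ℝ))
      = (1 - lam1) * ∑ i, u i * (y1 i : ℝ) + lam1 * ∑ i, u i * (y1' i : ℝ) := by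
    intro u
    rw [Finset.mul_sum, Finset.mul_sum, ← Finset.sum_add_distrib]
    exact Finset.sum_congr rfl fun i _ => by rw [hF1 i]; ring
  have hsum2 : ∀ u : Fin n → ℝ, ∑ i, u i * ((y2 i : ℝ) + b * (c2 i : ℝ))
      = (1 - lam2) * ∑ i, u i * (y2 i : ℝ) + lam2 * ∑ i, u i * (y2' i : ℝ) := by
    intro u
    rw [Finset.mul_sum, Finset.mul_sum, ← Finset.sum_add_distrib]
    exact Finset.sum_congr rfl fun i _ => by rw [hF2 i]; ring
  have key1' : (W1 y1 - ∑ i, P i * (y1 i : ℝ))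
      + ∑ i, (P i - p i) * ((y1 i : ℝ) + a * (c1 i : ℝ))
      ≤ W1 (x 0) - ∑ i, p i * (x 0 i : ℝ) := by
    have expand : (W1 y1 - ∑ i, P i * (y1 i : ℝ))
        + ∑ i, (P i - p i) * ((y1 i : ℝ) + a * (c1 i : ℝ))
        = (1 - lam1) * (W1 y1 - ∑ i, p i * (y1 i : ℝ))
          + lam1 * (W1 y1' - ∑ i, p i * (y1' i : ℝ)) := by
      rw [hsum1 (fun i => P i - p i)]
      have e1 : ∑ i, (P i - p i) * (y1 i : ℝ)
          = ∑ i, P i * (y1 i : ℝ) - ∑ i, p i * (y1 i : ℝ) := by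
        rw [← Finset.sum_sub_distrib]; exact Finset.sum_congr rfl fun i _ => by ring
      have e1' : ∑ i, (P i - p i) * (y1' i : ℝ)
          = ∑ i, P i * (y1' i : ℝ) - ∑ i, p i * (y1' i : ℝ) := by
        rw [← Finset.sum_sub_distrib]; exact Finset.sum_congr rfl fun i _ => by ring
      rw [e1, e1']
      linear_combination (-lam1) * hA1
    rw [expand]; exact key1
  have key2' : (W2 y2 - ∑ i, P i * (y2 i : ℝ))
      + ∑ i, (P i - p i) * ((y2 i : ℝ) + b * (c2 i : ℝ))
      ≤ W2 (x 1) - ∑ i, p i * (x 1 i : ℝ) := by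
    have expand : (W2 y2 - ∑ i, P i * (y2 i : ℝ))
        + ∑ i, (P i - p i) * ((y2 i : ℝ) + b * (c2 i : ℝ))
        = (1 - lam2) * (W2 y2 - ∑ i, p i * (y2 i : ℝ))
          + lam2 * (W2 y2' - ∑ i, p i * (y2' i : ℝ)) := by
      rw [hsum2 (fun i => P i - p i)]
      have e1 : ∑ i, (P i - p i) * (y2 i : ℝ)
          = ∑ i, P i * (y2 i : ℝ) - ∑ i, p i * (y2 i : ℝ) := by
        rw [← Finset.sum_sub_distrib]; exact Finset.sum_congr rfl fun i _ => by ring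
      have e1' : ∑ i, (P i - p i) * (y2' i : ℝ)
          = ∑ i, P i * (y2' i : ℝ) - ∑ i, p i * (y2' i : ℝ) := by
        rw [← Finset.sum_sub_distrib]; exact Finset.sum_congr rfl fun i _ => by ring
      rw [e1, e1']
      linear_combination (-lam2) * hA2
    rw [expand]; exact key2
  -- splitting mixed sums
  have hPpF1 : ∑ i, (P i - p i) * ((y1 i : ℝ) + a * (c1 i : ℝ))
      = ∑ i, P i * ((y1 i : ℝ) + a * (c1 i : ℝ)) - ∑ i, p i * ((y1 i : ℝ) + a * (c1 i : ℝ)) := by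
    rw [← Finset.sum_sub_distrib]; exact Finset.sum_congr rfl fun i _ => by ring
  have hPpF2 : ∑ i, (P i - p i) * ((y2 i : ℝ) + b * (c2 i : ℝ))
      = ∑ i, P i * ((y2 i : ℝ) + b * (c2 i : ℝ)) - ∑ i, p i * ((y2 i : ℝ) + b * (c2 i : ℝ)) := by
    rw [← Finset.sum_sub_distrib]; exact Finset.sum_congr rfl fun i _ => by ring
  have hsplitE : ∀ u : Fin n → ℝ, ∑ i, u i * (e i : ℝ)
      = ∑ i, u i * ((y1 i : ℝ) + a * (c1 i : ℝ)) + ∑ i, u i * ((y2 i : ℝ) + b * (c2 i : ℝ))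
        + ∑ i, u i * Z i := by
    intro u
    rw [← Finset.sum_add_distrib, ← Finset.sum_add_distrib]
    exact Finset.sum_congr rfl fun i _ => by rw [hEdec i]; ring
  have hclearsum : ∀ u : Fin n → ℝ, ∑ i, u i * (e i : ℝ)
      = ∑ i, u i * (x 0 i : ℝ) + ∑ i, u i * (x 1 i : ℝ) + ∑ i, u i * (x 2 i : ℝ) := by
    intro u
    rw [← Finset.sum_add_distrib, ← Finset.sum_add_distrib]
    exact Finset.sum_congr rfl fun i _ => by rw [← hclearR i]; ring
  have hRZP : ∑ i, R i * Z i = ∑ i, P i * Z i := by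
    apply Finset.sum_congr rfl
    intro i _
    by_cases hik : i = k
    · subst hik; rw [hZk]; ring
    · by_cases hil : i = ℓ
      · subst hil; rw [hZl]; ring
      · have hri : R i = P i := by simp [hRdef, hik, hil]
        rw [hri]
  -- forcing the equalities
  have geq0 : W1 (x 0) - ∑ i, P i * (x 0 i : ℝ) = W1 y1 - ∑ i, P i * (y1 i : ℝ) := by
    linarith [key1', key2', key3, g0, g1, g2, hRZP, hsplitE p, hsplitE P,
      hclearsum p, hclearsum P, hPpF1, hPpF2]
  have geq1 : W2 (x 1) - ∑ i, P i * (x 1 i : ℝ) = W2 y2 - ∑ i, P i * (y2 i : ℝ) := by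
    linarith [key1', key2', key3, g0, g1, g2, hRZP, hsplitE p, hsplitE P,
      hclearsum p, hclearsum P, hPpF1, hPpF2]
  have geq2 : ∑ i, R i * (x 2 i : ℝ) = ∑ i, P i * (x 2 i : ℝ) := by
    linarith [key1', key2', key3, g0, g1, g2, hRZP, hsplitE p, hsplitE P,
      hclearsum p, hclearsum P, hPpF1, hPpF2]
  -- agents 1 and 2 demand at P, hence on the segments
  have hx0D : x 0 ∈ Demand n M V1 p1 := by
    rw [← hDW1]
    exact ⟨hxbox 0, fun yy hyy => le_trans (hy1W.2 yy hyy) (le_of_eq geq0.symm)⟩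
  have hx1D : x 1 ∈ Demand n M V2 p2 := by
    rw [← hDW2]
    exact ⟨hxbox 1, fun yy hyy => le_trans (hy2W.2 yy hyy) (le_of_eq geq1.symm)⟩
  have hx0seg : (fun i => (x 0 i : ℝ)) ∈ segment ℝ (fun i => (y1 i : ℝ)) (fun i => (y1' i : ℝ)) := by
    have himg := Set.mem_image_of_mem (fun (z : Fin n → ℕ) (i : Fin n) => (z i : ℝ)) hx0D
    have hch := subset_convexHull ℝ _ himg
    rw [hull1] at hch
    exact hch
  have hx1seg : (fun i => (x 1 i : ℝ)) ∈ segment ℝ (fun i => (y2 i : ℝ)) (fun i => (y2' i : ℝ)) := by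
    have himg := Set.mem_image_of_mem (fun (z : Fin n → ℕ) (i : Fin n) => (z i : ℝ)) hx1D
    have hch := subset_convexHull ℝ _ himg
    rw [hull2] at hch
    exact hch
  obtain ⟨s, hs⟩ := seg_lattice n y1 y1' (x 0) c1 N1 hdiff1 hprim1 k (by omega) hx0seg
  obtain ⟨u, hu⟩ := seg_lattice n y2 y2' (x 1) c2 N2 hdiff2 hprim2 k (by omega) hx1seg
  -- agent 3 holds nothing of goods k, ℓ
  have hsum0 : ∑ i, (P i - R i) * (x 2 i : ℝ) = 0 := by
    have hsplit : ∑ i, (P i - R i) * (x 2 i : ℝ)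
        = ∑ i, P i * (x 2 i : ℝ) - ∑ i, R i * (x 2 i : ℝ) := by
      rw [← Finset.sum_sub_distrib]; exact Finset.sum_congr rfl fun i _ => by ring
    rw [hsplit]; linarith [geq2]
  have hall := (Finset.sum_eq_zero_iff_of_nonneg
    (fun i _ => mul_nonneg (by linarith [hRP i]) (Nat.cast_nonneg (x 2 i)))).mp hsum0
  have hx2k : x 2 k = 0 := by
    have h := hall k (Finset.mem_univ k)
    rw [hRk, sub_zero] at h
    rcases mul_eq_zero.mp h with h' | h'
    · exfalso; linarith [hP1 k]
    · exact_mod_cast h'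
  have hx2l : x 2 ℓ = 0 := by
    have h := hall ℓ (Finset.mem_univ ℓ)
    rw [hRl, sub_zero] at h
    rcases mul_eq_zero.mp h with h' | h'
    · exfalso; linarith [hP1 ℓ]
    · exact_mod_cast h'
  -- integer market clearing in coordinates k and ℓ
  have hek : ⌈v k⌉ = t1 := by rw [hvk]; exact Int.ceil_intCast t1
  have hel : ⌈v ℓ⌉ = t2 := by rw [hvl]; exact Int.ceil_intCast t2
  have heke : e k = (y1 k : ℤ) + (y2 k : ℤ) + t1 := by
    rw [hedef]; simp only []; rw [hek]
  have hele : e ℓ = (y1 ℓ : ℤ) + (y2 ℓ : ℤ) + t2 := by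
    rw [hedef]; simp only []; rw [hel]
  have hx2kZ : (x 2 k : ℤ) = 0 := by exact_mod_cast hx2k
  have hx2lZ : (x 2 ℓ : ℤ) = 0 := by exact_mod_cast hx2l
  have eqk : s * c1 k + u * c2 k = t1 := by
    have h1 := hclearZ k
    have h2 := hs k
    have h3 := hu k
    rw [heke] at h1
    linarith
  have eql : s * c1 ℓ + u * c2 ℓ = t2 := by
    have h1 := hclearZ ℓ
    have h2 := hs ℓ
    have h3 := hu ℓ
    rw [hele] at h1
    linarith
  -- the final arithmetic contradiction
  have hsD : s * D = -c2 ℓ := by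
    linear_combination (-c2 ℓ) * eqk + c2 k * eql + s * hDdef - c2 ℓ * ht1def + c2 k * ht2def
  rcases le_or_gt s 0 with hs0 | hs0
  · nlinarith [hsD, hc2l, hDpos, hs0]
  · have hs1 : 1 ≤ s := hs0
    nlinarith [hsD, hDlb, hs1, hDpos]
end

section
/- Let V: X → ℝ with X ⊆ ℤ^I finite, p ∈ ℝ^I, and let x' be an extreme point of the convex hull of D(p) = argmax_{x ∈ X}{V(x) − p·x}. Then for every ε > 0 there exists s ∈ ℝ^I with ‖s‖ < ε such that D(p + s) = {x'}. -/
def DemandZ (n : ℕ) (X : Finset (Fin n → ℤ)) (V : (Fin n → ℤ) → ℝ) (p : Fin n → ℝ) :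
    Set (Fin n → ℤ) :=
  {x | x ∈ X ∧ ∀ y ∈ X, V y - ∑ i, p i * (y i : ℝ) ≤ V x - ∑ i, p i * (x i : ℝ)}

/-!
An extreme point `x'` of the polytope `conv D(p)` is strictly exposed: by Hahn–Banach there is a
linear functional `f` with `f x' < f y` for every other demanded bundle `y`. Perturbing the prices
by `δ • f` with `δ > 0` small keeps the bundles outside `D(p)` strictly worse than `x'`, since
finitely many strict inequalities survive a small perturbation, and breaks the tie among the
bundles of `D(p)` in favour of `x'`, which is charged the least.
-/

open Filter Topology Set

theorem notMem_convexHull_sdiff_of_mem_extremePoints_convexHull {𝕜 E : Type*} [Field 𝕜]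
    [LinearOrder 𝕜] [IsStrictOrderedRing 𝕜] [AddCommGroup E] [Module 𝕜 E] {S : Set E} {x : E}
    (hx : x ∈ (convexHull 𝕜 S).extremePoints 𝕜) : x ∉ convexHull 𝕜 (S \ {x}) := fun h =>
  ((convex_convexHull 𝕜 S).mem_extremePoints_iff_mem_sdiff_convexHull_sdiff.1 hx).2
    (convexHull_mono (sdiff_subset_sdiff_left (subset_convexHull 𝕜 S)) h)

theorem exists_strongDual_lt_of_mem_extremePoints_convexHull {E : Type*} [AddCommGroup E]
    [Module ℝ E] [TopologicalSpace E] [T2Space E] [IsTopologicalAddGroup E] [ContinuousSMul ℝ E]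
    [LocallyConvexSpace ℝ E] {S : Set E} (hS : S.Finite) {x : E}
    (hx : x ∈ (convexHull ℝ S).extremePoints ℝ) :
    ∃ f : StrongDual ℝ E, ∀ y ∈ S, y ≠ x → f x < f y := by
  obtain ⟨f, u, hxu, hu⟩ := geometric_hahn_banach_point_closed (convex_convexHull ℝ _)
    (hS.sdiff.isClosed_convexHull ℝ) (notMem_convexHull_sdiff_of_mem_extremePoints_convexHull hx)
  exact ⟨f, fun y hy hyx => hxu.trans (hu y (subset_convexHull ℝ _ ⟨hy, hyx⟩))⟩

theorem eventually_forall_add_mul_lt_of_forall_le {α : Type*} {X : Finset α} {u g : α → ℝ}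
    {x : α} (hux : ∀ y ∈ X, u y ≤ u x) (hg : ∀ y ∈ X, u y = u x → y ≠ x → g y < g x) :
    ∀ᶠ δ in 𝓝[>] (0 : ℝ), ∀ y ∈ X, y ≠ x → u y + δ * g y < u x + δ * g x := by
  refine (eventually_all_finset X).2 fun y hy => ?_
  rcases (hux y hy).eq_or_lt with heq | hlt
  · filter_upwards [self_mem_nhdsWithin] with δ (hδ : 0 < δ) hyx
    rw [heq]
    gcongr
    exact hg y hy heq hyx
  · have hnear : ∀ᶠ δ in 𝓝 (0 : ℝ), u y + δ * g y < u x + δ * g x :=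
      ContinuousAt.eventually_lt (by fun_prop) (by fun_prop) (by simpa using hlt)
    filter_upwards [nhdsWithin_le_nhds hnear] with δ h _ using h

def surplus {ι : Type*} [Fintype ι] (V : (ι → ℤ) → ℝ) (p : ι → ℝ) (x : ι → ℤ) : ℝ :=
  V x - ∑ i, p i * (x i : ℝ)

theorem surplus_add {ι : Type*} [Fintype ι] (V : (ι → ℤ) → ℝ) (p s : ι → ℝ) (x : ι → ℤ) :
    surplus V (p + s) x = surplus V p x - ∑ i, s i * (x i : ℝ) := by
  simp only [surplus, Pi.add_apply, add_mul, Finset.sum_add_distrib]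
  ring

theorem mem_demandZ_iff {n : ℕ} {X : Finset (Fin n → ℤ)} {V : (Fin n → ℤ) → ℝ} {p : Fin n → ℝ}
    {x : Fin n → ℤ} : x ∈ DemandZ n X V p ↔ x ∈ X ∧ ∀ y ∈ X, surplus V p y ≤ surplus V p x :=
  Iff.rfl

theorem demandZ_eq_singleton {n : ℕ} {X : Finset (Fin n → ℤ)} {V : (Fin n → ℤ) → ℝ}
    {p : Fin n → ℝ} {x : Fin n → ℤ} (hx : x ∈ X)
    (hlt : ∀ y ∈ X, y ≠ x → surplus V p y < surplus V p x) : DemandZ n X V p = {x} := by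
  ext y
  rw [mem_demandZ_iff, mem_singleton_iff]
  constructor
  · rintro ⟨hy, hmax⟩
    by_contra hyx
    exact (hmax x hx).not_gt (hlt y hy hyx)
  · rintro rfl
    exact ⟨hx, fun z hz => (eq_or_ne z y).elim (fun h => h ▸ le_rfl) fun h => (hlt z hz h).le⟩

/-- Any extreme point of the demand polytope can be made uniquely demanded by an
arbitrarily small price perturbation. -/
theorem extreme_point_uniquely_demanded (n : ℕ) (X : Finset (Fin n → ℤ))
    (V : (Fin n → ℤ) → ℝ) (p : Fin n → ℝ) (x' : Fin n → ℤ)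
    (hx' : (fun i => ((x' i : ℝ))) ∈ Set.extremePoints ℝ
      (convexHull ℝ ((fun (y : Fin n → ℤ) (i : Fin n) => (y i : ℝ)) '' DemandZ n X V p))) :
    ∀ ε > 0, ∃ s : Fin n → ℝ, ‖s‖ < ε ∧ DemandZ n X V (p + s) = {x'} := by
  intro ε hε
  set cast : (Fin n → ℤ) → Fin n → ℝ := fun y i => (y i : ℝ)
  have hcast : Function.Injective cast := Int.cast_injective.comp_left
  have hx'D : x' ∈ DemandZ n X V p :=
    hcast.mem_set_image.1 (extremePoints_convexHull_subset hx')
  obtain ⟨f, hf⟩ := exists_strongDual_lt_of_mem_extremePoints_convexHull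
    ((X.finite_toSet.subset fun y hy => hy.1).image cast) hx'
  set w : Fin n → ℝ := fun i => f fun j => if i = j then 1 else 0
  have hfw (y : Fin n → ℤ) : f (cast y) = ∑ i, w i * y i := by
    rw [← ContinuousLinearMap.coe_coe, LinearMap.pi_apply_eq_sum_univ]
    simp [cast, w, mul_comm]
  have hsmall : ∀ᶠ δ in 𝓝[>] (0 : ℝ), ‖δ • w‖ < ε := by
    have hw : Tendsto (fun δ : ℝ => δ • w) (𝓝 0) (𝓝 0) := by
      simpa using (tendsto_id (x := 𝓝 (0 : ℝ))).smul_const w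
    exact nhdsWithin_le_nhds (NormedAddGroup.tendsto_nhds_zero.1 hw ε hε)
  have hunique := eventually_forall_add_mul_lt_of_forall_le (u := surplus V p)
    (g := fun y => -f (cast y)) hx'D.2 fun y hy heq hyx =>
      neg_lt_neg (hf _ ⟨y, ⟨hy, fun z hz => (hx'D.2 z hz).trans heq.ge⟩, rfl⟩ (hcast.ne hyx))
  obtain ⟨δ, hδ, hδu⟩ := (hsmall.and hunique).exists
  refine ⟨δ • w, hδ, demandZ_eq_singleton hx'D.1 fun y hy hyx => ?_⟩
  simpa [surplus_add, hfw, Finset.mul_sum, mul_assoc, sub_eq_add_neg] using hδu y hy hyx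
end
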